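/- arXiv:2310.10588 — 8 statements merged into one kernel-verified Lean document; each statement's English description precedes it below -/
import Mathlib

section
/- For all w₁, w₂ > 0, setting z_i^n = n·D_i/w_i for i = 1, 2, one has lim_{n→∞} n·(1 − F₁₂(z₁^n, z₂^n)) = ℓ(w₁, w₂), where ℓ(w₁, w₂) = w₁·(∫ x₁h₁(x) dμ(x))/D₁ + w₂·(∫ x₂h₂(x) dμ(x))/D₂ + ∫ x₁₂·max{w₁h₁(x)/D₁, w₂h₂(x)/D₂} dμ(x). That is, ℓ is the stable upper tail-dependence function of the bivariate max-convolution distribution (Proposition 1 of the paper). -/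
/-!
Substituting `zᵢ = n Dᵢ / wᵢ`, the exponent in `F₁₂` becomes `-G(x) / n` for a single integrand
`G ≥ 0` not depending on `n`, so `n (1 - F₁₂) = ∫ n (1 - exp (-G / n)) dμ`. The integrands
converge to `G` (the derivative of `exp` at `0`) and are bounded by `G` (since `1 - e⁻ᵗ ≤ t`),
and `G` is dominated by a combination of `(xᵢ + x₁₂) hᵢ`, so dominated convergence gives
`∫ G dμ = ℓ(w₁, w₂)`.
-/

open MeasureTheory Filter Real Topology

theorem tendsto_natCast_mul_one_sub_exp_neg_div (c : ℝ) :
    Tendsto (fun n : ℕ => (n : ℝ) * (1 - exp (-c / n))) atTop (𝓝 c) := by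
  have hderiv : HasDerivAt (fun t => exp (-c * t)) (-c) 0 := by
    simpa using ((hasDerivAt_id (0 : ℝ)).const_mul (-c)).exp
  have hinv : Tendsto (fun n : ℕ => (n : ℝ)⁻¹) atTop (𝓝[≠] 0) :=
    (tendsto_inv_atTop_nhdsGT_zero.mono_right (nhdsWithin_mono _ fun _ h => ne_of_gt h)).comp
      tendsto_natCast_atTop_atTop
  have hslope := ((hasDerivAt_iff_tendsto_slope_zero.mp hderiv).comp hinv).neg
  rw [neg_neg] at hslope
  refine hslope.congr fun n => ?_
  simp only [zero_add, neg_mul, mul_zero, exp_zero, smul_eq_mul, Function.comp_apply, inv_inv,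
    div_eq_mul_inv]
  ring

theorem norm_mul_one_sub_exp_neg_div_le {t c : ℝ} (ht : 0 ≤ t) (hc : 0 ≤ c) :
    ‖t * (1 - exp (-c / t))‖ ≤ c := by
  rw [neg_div]
  have hexp : exp (-(c / t)) ≤ 1 := exp_le_one_iff.mpr (neg_nonpos.mpr (by positivity))
  rw [norm_of_nonneg (mul_nonneg ht (sub_nonneg.mpr hexp))]
  rcases ht.eq_or_lt with rfl | ht
  · simpa using hc
  calc t * (1 - exp (-(c / t))) ≤ t * (c / t) := by
        gcongr; linarith [one_sub_le_exp_neg (c / t)]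
    _ = c := mul_div_cancel₀ c ht.ne'

theorem tendsto_natCast_mul_one_sub_integral_exp_neg_div {α : Type*} [MeasurableSpace α]
    {μ : Measure α} [IsProbabilityMeasure μ] {g : α → ℝ} (hg : Integrable g μ)
    (hg0 : 0 ≤ᵐ[μ] g) :
    Tendsto (fun n : ℕ => (n : ℝ) * (1 - ∫ x, exp (-g x / n) ∂μ)) atTop
      (𝓝 (∫ x, g x ∂μ)) := by
  have hmeas : ∀ n : ℕ, AEStronglyMeasurable (fun x => (n : ℝ) * (1 - exp (-g x / n))) μ :=
    fun n => ((hg.aemeasurable.neg.div_const _).exp.const_sub 1 |>.const_mul _)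
      |>.aestronglyMeasurable
  have hbound : ∀ n : ℕ, ∀ᵐ x ∂μ, ‖(n : ℝ) * (1 - exp (-g x / n))‖ ≤ g x := fun n =>
    hg0.mono fun x hx => norm_mul_one_sub_exp_neg_div_le n.cast_nonneg hx
  have hexp : ∀ n : ℕ, Integrable (fun x => exp (-g x / n)) μ := fun n =>
    (integrable_const 1).mono' (hg.aemeasurable.neg.div_const _).exp.aestronglyMeasurable
      (hg0.mono fun x hx => by
        rw [norm_of_nonneg (exp_nonneg _), exp_le_one_iff, neg_div, neg_nonpos]
        exact div_nonneg hx n.cast_nonneg)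
  have hcomm : ∀ n : ℕ, (n : ℝ) * (1 - ∫ x, exp (-g x / n) ∂μ)
      = ∫ x, (n : ℝ) * (1 - exp (-g x / n)) ∂μ := fun n => by
    rw [integral_const_mul, integral_sub (integrable_const 1) (hexp n), integral_const,
      probReal_univ, one_smul]
  simp_rw [hcomm]
  exact tendsto_integral_of_dominated_convergence g hmeas hg hbound
    (ae_of_all _ fun x => tendsto_natCast_mul_one_sub_exp_neg_div (g x))

theorem integrable_mul_of_integrable_add_mul {α : Type*} [MeasurableSpace α] {μ : Measure α}
    {f g h : α → ℝ} (hi : Integrable (fun x => (f x + g x) * h x) μ)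
    (hfh : AEStronglyMeasurable (fun x => f x * h x) μ)
    (hf : 0 ≤ᵐ[μ] f) (hg : 0 ≤ᵐ[μ] g) (hh : 0 ≤ᵐ[μ] h) :
    Integrable (fun x => f x * h x) μ :=
  hi.mono' hfh <| by
    filter_upwards [hf, hg, hh] with x hf hg hh
    rw [norm_of_nonneg (mul_nonneg hf hh)]
    exact mul_le_mul_of_nonneg_right (le_add_of_nonneg_right hg) hh

/-- With `cᵢ = wᵢ / Dᵢ`, the integral of this function is `ℓ(w₁, w₂)`. -/
def tailIntegrand (h₁ h₂ : ℝ × ℝ × ℝ → ℝ) (c₁ c₂ : ℝ) (x : ℝ × ℝ × ℝ) : ℝ :=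
  c₁ * (x.1 * h₁ x) + c₂ * (x.2.1 * h₂ x) + x.2.2 * max (c₁ * h₁ x) (c₂ * h₂ x)

section tailIntegrand

variable {μ : Measure (ℝ × ℝ × ℝ)} {h₁ h₂ : ℝ × ℝ × ℝ → ℝ} {c₁ c₂ : ℝ}

theorem neg_tailIntegrand_div {t : ℝ} (ht : 0 ≤ t) (x : ℝ × ℝ × ℝ) :
    -(x.1 * h₁ x) / (t / c₁) - x.2.1 * h₂ x / (t / c₂)
      - x.2.2 * max (h₁ x / (t / c₁)) (h₂ x / (t / c₂))
      = -tailIntegrand h₁ h₂ c₁ c₂ x / t := by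
  rw [div_div_eq_mul_div, div_div_eq_mul_div, div_div_eq_mul_div, div_div_eq_mul_div,
    max_div_div_right ht, mul_comm (h₁ x), mul_comm (h₂ x), tailIntegrand]
  ring

theorem tailIntegrand_nonneg {x : ℝ × ℝ × ℝ} (hx : 0 ≤ x.1 ∧ 0 ≤ x.2.1 ∧ 0 ≤ x.2.2)
    (hh₁ : 0 ≤ h₁ x) (hh₂ : 0 ≤ h₂ x) (hc₁ : 0 ≤ c₁) (hc₂ : 0 ≤ c₂) :
    0 ≤ tailIntegrand h₁ h₂ c₁ c₂ x := by
  obtain ⟨hx₁, hx₂, hx₁₂⟩ := hx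
  unfold tailIntegrand
  positivity

theorem tailIntegrand_le {x : ℝ × ℝ × ℝ} (hx₁₂ : 0 ≤ x.2.2)
    (hh₁ : 0 ≤ h₁ x) (hh₂ : 0 ≤ h₂ x) (hc₁ : 0 ≤ c₁) (hc₂ : 0 ≤ c₂) :
    tailIntegrand h₁ h₂ c₁ c₂ x
      ≤ c₁ * ((x.1 + x.2.2) * h₁ x) + c₂ * ((x.2.1 + x.2.2) * h₂ x) := by
  have hmax : max (c₁ * h₁ x) (c₂ * h₂ x) ≤ c₁ * h₁ x + c₂ * h₂ x :=
    max_le_add_of_nonneg (mul_nonneg hc₁ hh₁) (mul_nonneg hc₂ hh₂)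
  unfold tailIntegrand
  nlinarith [mul_le_mul_of_nonneg_left hmax hx₁₂]

theorem integrable_tailIntegrand (hm₁ : Measurable h₁) (hm₂ : Measurable h₂)
    (hx : ∀ᵐ x ∂μ, 0 ≤ x.1 ∧ 0 ≤ x.2.1 ∧ 0 ≤ x.2.2)
    (hh₁ : ∀ x, 0 ≤ h₁ x) (hh₂ : ∀ x, 0 ≤ h₂ x) (hc₁ : 0 ≤ c₁) (hc₂ : 0 ≤ c₂)
    (hi₁ : Integrable (fun x => (x.1 + x.2.2) * h₁ x) μ)
    (hi₂ : Integrable (fun x => (x.2.1 + x.2.2) * h₂ x) μ) :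
    Integrable (tailIntegrand h₁ h₂ c₁ c₂) μ := by
  have hmeas : Measurable (tailIntegrand h₁ h₂ c₁ c₂) := by
    unfold tailIntegrand
    fun_prop
  refine ((hi₁.const_mul c₁).add (hi₂.const_mul c₂)).mono' hmeas.aestronglyMeasurable ?_
  filter_upwards [hx] with x hx
  rw [norm_of_nonneg (tailIntegrand_nonneg hx (hh₁ x) (hh₂ x) hc₁ hc₂)]
  exact tailIntegrand_le hx.2.2 (hh₁ x) (hh₂ x) hc₁ hc₂

theorem integral_tailIntegrand (hG : Integrable (tailIntegrand h₁ h₂ c₁ c₂) μ)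
    (hf₁ : Integrable (fun x => x.1 * h₁ x) μ) (hf₂ : Integrable (fun x => x.2.1 * h₂ x) μ) :
    ∫ x, tailIntegrand h₁ h₂ c₁ c₂ x ∂μ
      = c₁ * ∫ x, x.1 * h₁ x ∂μ + c₂ * ∫ x, x.2.1 * h₂ x ∂μ
        + ∫ x, x.2.2 * max (c₁ * h₁ x) (c₂ * h₂ x) ∂μ := by
  have hlin : Integrable (fun x => c₁ * (x.1 * h₁ x) + c₂ * (x.2.1 * h₂ x)) μ :=
    (hf₁.const_mul c₁).add (hf₂.const_mul c₂)
  have hmax : Integrable (fun x => x.2.2 * max (c₁ * h₁ x) (c₂ * h₂ x)) μ := by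
    convert hG.sub hlin using 1
    ext x
    simp only [tailIntegrand, Pi.sub_apply]
    ring
  unfold tailIntegrand
  rw [integral_add hlin hmax, integral_add (hf₁.const_mul c₁) (hf₂.const_mul c₂),
    integral_const_mul, integral_const_mul]

end tailIntegrand

theorem stable_tail_dependence_function_general
    (μ : Measure (ℝ × ℝ × ℝ)) [IsProbabilityMeasure μ]
    (hsupp : ∀ᵐ x ∂μ, 0 < x.1 ∧ 0 < x.2.1 ∧ 0 < x.2.2)
    (h₁ h₂ : ℝ × ℝ × ℝ → ℝ) (hm1 : Measurable h₁) (hm2 : Measurable h₂)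
    (hp1 : ∀ x, 0 < h₁ x) (hp2 : ∀ x, 0 < h₂ x)
    (hi1 : Integrable (fun x => (x.1 + x.2.2) * h₁ x) μ)
    (hi2 : Integrable (fun x => (x.2.1 + x.2.2) * h₂ x) μ)
    (D₁ D₂ : ℝ)
    (hD1pos : 0 < D₁) (hD2pos : 0 < D₂)
    (F : ℝ → ℝ → ℝ)
    (hF : ∀ z₁ z₂ : ℝ, F z₁ z₂ =
      ∫ x, Real.exp (-(x.1 * h₁ x) / z₁ - (x.2.1 * h₂ x) / z₂
        - x.2.2 * max (h₁ x / z₁) (h₂ x / z₂)) ∂μ)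
    (w₁ w₂ : ℝ) (hw1 : 0 < w₁) (hw2 : 0 < w₂) :
    Tendsto (fun n : ℕ => (n : ℝ) * (1 - F ((n : ℝ) * D₁ / w₁) ((n : ℝ) * D₂ / w₂)))
      atTop
      (nhds (w₁ * (∫ x, x.1 * h₁ x ∂μ) / D₁ + w₂ * (∫ x, x.2.1 * h₂ x ∂μ) / D₂
        + ∫ x, x.2.2 * max (w₁ * h₁ x / D₁) (w₂ * h₂ x / D₂) ∂μ)) := by
  set G := tailIntegrand h₁ h₂ (w₁ / D₁) (w₂ / D₂)
  have hc₁ : 0 ≤ w₁ / D₁ := div_nonneg hw1.le hD1pos.le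
  have hc₂ : 0 ≤ w₂ / D₂ := div_nonneg hw2.le hD2pos.le
  have hx : ∀ᵐ x ∂μ, 0 ≤ x.1 ∧ 0 ≤ x.2.1 ∧ 0 ≤ x.2.2 :=
    hsupp.mono fun x hx => ⟨hx.1.le, hx.2.1.le, hx.2.2.le⟩
  have hh₁ : ∀ x, 0 ≤ h₁ x := fun x => (hp1 x).le
  have hh₂ : ∀ x, 0 ≤ h₂ x := fun x => (hp2 x).le
  have hG : Integrable G μ := integrable_tailIntegrand hm1 hm2 hx hh₁ hh₂ hc₁ hc₂ hi1 hi2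
  have hG0 : 0 ≤ᵐ[μ] G := hx.mono fun x hx => tailIntegrand_nonneg hx (hh₁ x) (hh₂ x) hc₁ hc₂
  have hF_eq : ∀ n : ℕ, F (n * D₁ / w₁) (n * D₂ / w₂) = ∫ x, exp (-G x / n) ∂μ := by
    intro n
    rw [← div_div_eq_mul_div, ← div_div_eq_mul_div, hF]
    simp_rw [neg_tailIntegrand_div n.cast_nonneg]
    rfl
  have hf₁ : Integrable (fun x => x.1 * h₁ x) μ :=
    integrable_mul_of_integrable_add_mul hi1 (by fun_prop) (hx.mono fun _ hx => hx.1)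
      (hx.mono fun _ hx => hx.2.2) (ae_of_all _ hh₁)
  have hf₂ : Integrable (fun x => x.2.1 * h₂ x) μ :=
    integrable_mul_of_integrable_add_mul hi2 (by fun_prop) (hx.mono fun _ hx => hx.2.1)
      (hx.mono fun _ hx => hx.2.2) (ae_of_all _ hh₂)
  have hlim := tendsto_natCast_mul_one_sub_integral_exp_neg_div hG hG0
  rw [integral_tailIntegrand hG hf₁ hf₂] at hlim
  simp only [hF_eq, mul_div_right_comm _ _ D₁, mul_div_right_comm _ _ D₂]
  exact hlim

/-- Proposition 1: the stable upper tail-dependence function of the bivariate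
max-convolution distribution. -/
theorem stable_tail_dependence_function
    (μ : Measure (ℝ × ℝ × ℝ)) [IsProbabilityMeasure μ]
    (hsupp : ∀ᵐ x ∂μ, 0 < x.1 ∧ 0 < x.2.1 ∧ 0 < x.2.2)
    (h₁ h₂ : ℝ × ℝ × ℝ → ℝ) (hm1 : Measurable h₁) (hm2 : Measurable h₂)
    (hp1 : ∀ x, 0 < h₁ x) (hp2 : ∀ x, 0 < h₂ x)
    (hi1 : Integrable (fun x => (x.1 + x.2.2) * h₁ x) μ)
    (hi2 : Integrable (fun x => (x.2.1 + x.2.2) * h₂ x) μ)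
    (D₁ D₂ : ℝ)
    (hD1 : D₁ = ∫ x, (x.1 + x.2.2) * h₁ x ∂μ)
    (hD2 : D₂ = ∫ x, (x.2.1 + x.2.2) * h₂ x ∂μ)
    (hD1pos : 0 < D₁) (hD2pos : 0 < D₂)
    (F : ℝ → ℝ → ℝ)
    (hF : ∀ z₁ z₂ : ℝ, F z₁ z₂ =
      ∫ x, Real.exp (-(x.1 * h₁ x) / z₁ - (x.2.1 * h₂ x) / z₂
        - x.2.2 * max (h₁ x / z₁) (h₂ x / z₂)) ∂μ)
    (w₁ w₂ : ℝ) (hw1 : 0 < w₁) (hw2 : 0 < w₂) :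
    Tendsto (fun n : ℕ => (n : ℝ) * (1 - F ((n : ℝ) * D₁ / w₁) ((n : ℝ) * D₂ / w₂)))
      atTop
      (nhds (w₁ * (∫ x, x.1 * h₁ x ∂μ) / D₁ + w₂ * (∫ x, x.2.1 * h₂ x ∂μ) / D₂
        + ∫ x, x.2.2 * max (w₁ * h₁ x / D₁) (w₂ * h₂ x / D₂) ∂μ)) :=
  stable_tail_dependence_function_general μ hsupp h₁ h₂ hm1 hm2 hp1 hp2 hi1 hi2 D₁ D₂ hD1pos hD2pos
    F hF w₁ w₂ hw1 hw2
end

section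
/- Let s₁, s₂ be points of the Euclidean plane ℝ² with ‖s₁ − s₂‖ = h, and let r₁, r₂ > 0 satisfy |r₁ − r₂| < h < r₁ + r₂. Then the Lebesgue area of B(s₁, r₁) ∩ B(s₂, r₂) equals r₁²·(φ₁ − (1/2)sin(2φ₁)) + r₂²·(φ₂ − (1/2)sin(2φ₂)), where φ₁ = arccos((h² + r₁² − r₂²)/(2hr₁)) and φ₂ = arccos((h² + r₂² − r₁²)/(2hr₂)). -/
open MeasureTheory Metric Real

/-! After an isometry we may take `s₁ = 0` and `s₂ = (h, 0)`. The two circles meet on the line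
`x = a₁` with `a₁ = (h² + r₁² - r₂²) / (2h)`; off this null line the lens is the disjoint union
of the segment of the first disk to the right of it and the segment of the second disk to its
left, at distance `a₂ = h - a₁` from the second centre. A segment of a disk of radius `r` cut at
distance `a` from its centre has area `2 ∫ₐʳ √(r² - x²) dx = r² arccos(a/r) - a √(r² - a²)`,
which is `r² (φ - sin (2φ) / 2)` for `φ = arccos (a/r)`. -/

noncomputable def circularSegmentArea (r t : ℝ) : ℝ :=
  r ^ 2 * (arccos t - (1 / 2) * sin (2 * arccos t))

lemma circularSegmentArea_nonneg (r t : ℝ) : 0 ≤ circularSegmentArea r t :=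
  mul_nonneg (sq_nonneg r) (by linarith [sin_le (mul_nonneg zero_le_two (arccos_nonneg t))])

lemma sqrt_one_sub_div_sq {r x : ℝ} (hr : 0 < r) :
    √(1 - (x / r) ^ 2) = √(r ^ 2 - x ^ 2) / r := by
  rw [show 1 - (x / r) ^ 2 = (r ^ 2 - x ^ 2) / r ^ 2 by field_simp, sqrt_div' _ (sq_nonneg r),
    sqrt_sq hr.le]

lemma circularSegmentArea_div {r a : ℝ} (hr : 0 < r) (ha₁ : -r ≤ a) (ha₂ : a ≤ r) :
    circularSegmentArea r (a / r) = r ^ 2 * arccos (a / r) - a * √(r ^ 2 - a ^ 2) := by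
  have h₁ : -1 ≤ a / r := by rwa [le_div_iff₀ hr, neg_one_mul]
  have h₂ : a / r ≤ 1 := by rwa [div_le_iff₀ hr, one_mul]
  rw [circularSegmentArea, sin_two_mul, cos_arccos h₁ h₂, sin_arccos, sqrt_one_sub_div_sq hr]
  field_simp

lemma hasDerivAt_circularSegmentPrimitive {r x : ℝ} (hr : 0 < r) (hx₁ : -r < x) (hx₂ : x < r) :
    HasDerivAt (fun x => (x * √(r ^ 2 - x ^ 2) + r ^ 2 * arcsin (x / r)) / 2)
      (√(r ^ 2 - x ^ 2)) x := by
  have hpos : 0 < r ^ 2 - x ^ 2 := by nlinarith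
  have hsq : HasDerivAt (fun x => r ^ 2 - x ^ 2) (-(2 * x)) x := by
    simpa using (hasDerivAt_pow 2 x).const_sub (r ^ 2)
  have hsqrt : HasDerivAt (fun x => √(r ^ 2 - x ^ 2)) (-(2 * x) / (2 * √(r ^ 2 - x ^ 2))) x :=
    hsq.sqrt hpos.ne'
  have harcsin : HasDerivAt (fun x => arcsin (x / r)) (1 / √(1 - (x / r) ^ 2) * (1 / r)) x := by
    refine (hasDerivAt_arcsin ?_ ?_).comp x ((hasDerivAt_id x).div_const r)
    · rw [ne_eq, div_eq_iff hr.ne']; linarith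
    · rw [ne_eq, div_eq_iff hr.ne']; linarith
  refine (((hasDerivAt_id x).mul hsqrt).add (harcsin.const_mul (r ^ 2))).div_const 2
    |>.congr_deriv ?_
  rw [sqrt_one_sub_div_sq hr]
  field_simp
  rw [id_eq, sq_sqrt hpos.le]
  ring

lemma integral_sqrt_sq_sub_sq {r a : ℝ} (hr : 0 < r) (ha₁ : -r ≤ a) (ha₂ : a ≤ r) :
    ∫ x in a..r, √(r ^ 2 - x ^ 2) = (r ^ 2 * arccos (a / r) - a * √(r ^ 2 - a ^ 2)) / 2 := by
  have hcont : Continuous fun x : ℝ => √(r ^ 2 - x ^ 2) := by fun_prop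
  rw [intervalIntegral.integral_eq_sub_of_hasDeriv_right_of_le ha₂ (by fun_prop)
    (fun x hx => (hasDerivAt_circularSegmentPrimitive hr (ha₁.trans_lt hx.1) hx.2).hasDerivWithinAt)
    (hcont.intervalIntegrable a r)]
  rw [sub_self, sqrt_zero, div_self hr.ne', arcsin_one, arccos_eq_pi_div_two_sub_arcsin]
  ring

lemma disk_inter_halfPlane_eq_regionBetween {r : ℝ} (hr : 0 ≤ r) (a : ℝ) :
    {p : ℝ × ℝ | p.1 ^ 2 + p.2 ^ 2 < r ^ 2 ∧ a < p.1}
      = regionBetween (fun x => -√(r ^ 2 - x ^ 2)) (fun x => √(r ^ 2 - x ^ 2)) (Set.Ioo a r) := by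
  ext ⟨x, y⟩
  have hy : -√(r ^ 2 - x ^ 2) < y ∧ y < √(r ^ 2 - x ^ 2) ↔ x ^ 2 + y ^ 2 < r ^ 2 := by
    rw [← abs_lt, lt_sqrt (abs_nonneg y), sq_abs]
    constructor <;> intro <;> linarith
  simp only [regionBetween, Set.mem_ofPred_eq, Set.mem_Ioo, hy]
  constructor
  · rintro ⟨hxy, hax⟩
    exact ⟨⟨hax, by nlinarith⟩, hxy⟩
  · rintro ⟨⟨hax, -⟩, hxy⟩
    exact ⟨hxy, hax⟩

lemma volume_disk_inter_halfPlane {r a : ℝ} (hr : 0 < r) (ha₁ : -r ≤ a) (ha₂ : a ≤ r) :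
    volume {p : ℝ × ℝ | p.1 ^ 2 + p.2 ^ 2 < r ^ 2 ∧ a < p.1}
      = ENNReal.ofReal (circularSegmentArea r (a / r)) := by
  have hint : IntegrableOn (fun x => √(r ^ 2 - x ^ 2)) (Set.Ioo a r) :=
    (Continuous.integrableOn_Icc (by fun_prop)).mono_set Set.Ioo_subset_Icc_self
  rw [disk_inter_halfPlane_eq_regionBetween hr.le, Measure.volume_eq_prod,
    volume_regionBetween_eq_integral (f := fun x => -√(r ^ 2 - x ^ 2)) hint.neg hint
      measurableSet_Ioo (fun x _ => neg_le_self (sqrt_nonneg _)),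
    integral_Ioc_eq_integral_Ioo.symm, ← intervalIntegral.integral_of_le ha₂]
  simp only [Pi.sub_apply, sub_neg_eq_add, ← two_mul]
  rw [intervalIntegral.integral_const_mul, integral_sqrt_sq_sub_sq hr ha₁ ha₂,
    circularSegmentArea_div hr ha₁ ha₂]
  ring_nf

lemma volume_disk_inter_halfPlane_left {r a : ℝ} (c : ℝ) (hr : 0 < r) (ha₁ : -r ≤ a)
    (ha₂ : a ≤ r) :
    volume {p : ℝ × ℝ | (p.1 - c) ^ 2 + p.2 ^ 2 < r ^ 2 ∧ p.1 < c - a}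
      = ENNReal.ofReal (circularSegmentArea r (a / r)) := by
  have hreflect : MeasurePreserving (Prod.map (fun x : ℝ => c - x) id) (volume : Measure (ℝ × ℝ))
      volume := by
    have hsub : MeasurePreserving (fun x : ℝ => c - x) := by
      simpa only [Function.comp_def, sub_eq_neg_add] using
        (measurePreserving_add_right volume c).comp (Measure.measurePreserving_neg volume)
    rw [Measure.volume_eq_prod]
    exact hsub.prod (MeasurePreserving.id volume)
  have hpre : {p : ℝ × ℝ | (p.1 - c) ^ 2 + p.2 ^ 2 < r ^ 2 ∧ p.1 < c - a}
      = Prod.map (fun x : ℝ => c - x) id ⁻¹' {p | p.1 ^ 2 + p.2 ^ 2 < r ^ 2 ∧ a < p.1} := by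
    ext ⟨x, y⟩
    simp only [Set.mem_ofPred_eq, Set.mem_preimage, Prod.map, id_eq]
    rw [show (x - c) ^ 2 = (c - x) ^ 2 by ring, lt_sub_comm]
  have hmeas : MeasurableSet {p : ℝ × ℝ | p.1 ^ 2 + p.2 ^ 2 < r ^ 2 ∧ a < p.1} := by
    measurability
  rw [hpre, hreflect.measure_preimage hmeas.nullMeasurableSet,
    volume_disk_inter_halfPlane hr ha₁ ha₂]

lemma chordAbscissa_mem_Icc {h r₁ r₂ : ℝ} (hh : 0 < h) (hlow : |r₁ - r₂| ≤ h)
    (hup : h ≤ r₁ + r₂) :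
    (h ^ 2 + r₁ ^ 2 - r₂ ^ 2) / (2 * h) ∈ Set.Icc (-r₁) r₁ := by
  obtain ⟨hlow₁, hlow₂⟩ := abs_le.1 hlow
  rw [Set.mem_Icc, le_div_iff₀ (by positivity), div_le_iff₀ (by positivity)]
  constructor <;> nlinarith

lemma disk_inter_disk_diff_chord {h r₁ r₂ d : ℝ} (hh : 0 < h)
    (hd : 2 * h * d = h ^ 2 + r₁ ^ 2 - r₂ ^ 2) :
    ({p : ℝ × ℝ | p.1 ^ 2 + p.2 ^ 2 < r₁ ^ 2} ∩ {p | (p.1 - h) ^ 2 + p.2 ^ 2 < r₂ ^ 2})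
        \ {p | p.1 = d}
      = {p | (p.1 - h) ^ 2 + p.2 ^ 2 < r₂ ^ 2 ∧ p.1 < d}
        ∪ {p | p.1 ^ 2 + p.2 ^ 2 < r₁ ^ 2 ∧ d < p.1} := by
  ext ⟨x, y⟩
  simp only [Set.mem_sdiff, Set.mem_inter_iff, Set.mem_union, Set.mem_ofPred_eq]
  constructor
  · rintro ⟨⟨h₁, h₂⟩, hx⟩
    rcases lt_or_gt_of_ne hx with hx | hx
    · exact Or.inl ⟨h₂, hx⟩
    · exact Or.inr ⟨h₁, hx⟩
  · rintro (⟨h₂, hx⟩ | ⟨h₁, hx⟩)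
    · exact ⟨⟨by nlinarith, h₂⟩, hx.ne⟩
    · exact ⟨⟨h₁, by nlinarith⟩, hx.ne'⟩

lemma volume_disk_inter_disk {h r₁ r₂ : ℝ} (hh : 0 < h) (hr₁ : 0 < r₁) (hr₂ : 0 < r₂)
    (hlow : |r₁ - r₂| ≤ h) (hup : h ≤ r₁ + r₂) :
    volume ({p : ℝ × ℝ | p.1 ^ 2 + p.2 ^ 2 < r₁ ^ 2} ∩ {p | (p.1 - h) ^ 2 + p.2 ^ 2 < r₂ ^ 2})
      = ENNReal.ofReal (circularSegmentArea r₁ ((h ^ 2 + r₁ ^ 2 - r₂ ^ 2) / (2 * h * r₁)))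
        + ENNReal.ofReal (circularSegmentArea r₂ ((h ^ 2 + r₂ ^ 2 - r₁ ^ 2) / (2 * h * r₂))) := by
  rw [← div_div (h ^ 2 + r₁ ^ 2 - r₂ ^ 2), ← div_div (h ^ 2 + r₂ ^ 2 - r₁ ^ 2)]
  set a₁ := (h ^ 2 + r₁ ^ 2 - r₂ ^ 2) / (2 * h) with ha₁_def
  set a₂ := (h ^ 2 + r₂ ^ 2 - r₁ ^ 2) / (2 * h) with ha₂_def
  obtain ⟨ha₁, ha₁'⟩ := chordAbscissa_mem_Icc hh hlow hup
  obtain ⟨ha₂, ha₂'⟩ := chordAbscissa_mem_Icc hh (by rwa [abs_sub_comm]) (by rwa [add_comm])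
  have hchord : 2 * h * a₁ = h ^ 2 + r₁ ^ 2 - r₂ ^ 2 := by rw [ha₁_def]; field_simp
  have ha₁₂ : a₁ = h - a₂ := by rw [ha₁_def, ha₂_def]; field_simp; ring
  have hline : volume {p : ℝ × ℝ | p.1 = a₁} = 0 := by
    rw [show {p : ℝ × ℝ | p.1 = a₁} = {a₁} ×ˢ Set.univ by ext; simp, Measure.volume_eq_prod,
      Measure.prod_prod, Real.volume_singleton, zero_mul]
  have hdisj : Disjoint {p : ℝ × ℝ | (p.1 - h) ^ 2 + p.2 ^ 2 < r₂ ^ 2 ∧ p.1 < a₁}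
      {p | p.1 ^ 2 + p.2 ^ 2 < r₁ ^ 2 ∧ a₁ < p.1} :=
    Set.disjoint_left.2 fun p hp hp' => lt_asymm hp.2 hp'.2
  have hleft : volume {p : ℝ × ℝ | (p.1 - h) ^ 2 + p.2 ^ 2 < r₂ ^ 2 ∧ p.1 < a₁}
      = ENNReal.ofReal (circularSegmentArea r₂ (a₂ / r₂)) := by
    rw [ha₁₂]
    exact volume_disk_inter_halfPlane_left h hr₂ ha₂ ha₂'
  rw [← measure_sdiff_null hline, disk_inter_disk_diff_chord hh hchord,
    measure_union hdisj (by measurability), hleft, volume_disk_inter_halfPlane hr₁ ha₁ ha₁',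
    add_comm]

section InnerProductSpace

variable {E : Type*} [NormedAddCommGroup E] [InnerProductSpace ℝ E] [FiniteDimensional ℝ E]
  [MeasurableSpace E] [BorelSpace E]

lemma volume_ball_inter_ball_eq_of_norm_eq {s₁ s₂ v : E} (hv : ‖v‖ = dist s₁ s₂) (r₁ r₂ : ℝ) :
    volume (ball s₁ r₁ ∩ ball s₂ r₂) = volume (ball (0 : E) r₁ ∩ ball v r₂) := by
  set e := Submodule.reflection (ℝ ∙ (s₂ - s₁ - v))ᗮ
  have he : e (s₂ - s₁) = v := Submodule.reflection_sub (by rw [hv, dist_comm, dist_eq_norm])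
  have hT : MeasurePreserving (fun p => e (p - s₁)) :=
    e.measurePreserving.comp (measurePreserving_sub_right volume s₁)
  have hpre : ball s₁ r₁ ∩ ball s₂ r₂ = (fun p => e (p - s₁)) ⁻¹' (ball 0 r₁ ∩ ball v r₂) := by
    ext p
    simp only [Set.mem_inter_iff, Set.mem_preimage, mem_ball, dist_eq_norm, sub_zero, ← he,
      ← map_sub, LinearIsometryEquiv.norm_map, sub_sub_sub_cancel_right]
  rw [hpre, hT.measure_preimage (measurableSet_ball.inter measurableSet_ball).nullMeasurableSet]

end InnerProductSpace

lemma EuclideanSpace.measurePreserving_finTwo :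
    MeasurePreserving (fun p : EuclideanSpace ℝ (Fin 2) => (p 0, p 1)) :=
  (volume_preserving_finTwoArrow ℝ).comp (PiLp.volume_preserving_ofLp (Fin 2))

lemma EuclideanSpace.ball_fin_two {r : ℝ} (hr : 0 < r) (x : EuclideanSpace ℝ (Fin 2)) :
    ball x r = (fun p : EuclideanSpace ℝ (Fin 2) => (p 0, p 1)) ⁻¹'
      {q | (q.1 - x 0) ^ 2 + (q.2 - x 1) ^ 2 < r ^ 2} := by
  ext p
  rw [mem_ball, EuclideanSpace.dist_eq, Fin.sum_univ_two, sqrt_lt' hr]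
  simp only [Real.dist_eq, sq_abs, Set.mem_preimage, Set.mem_ofPred_eq]

lemma volume_ball_zero_inter_ball_single {r₁ r₂ : ℝ} (hr₁ : 0 < r₁) (hr₂ : 0 < r₂) (h : ℝ) :
    volume (ball (0 : EuclideanSpace ℝ (Fin 2)) r₁ ∩ ball (EuclideanSpace.single 0 h) r₂)
      = volume ({p : ℝ × ℝ | p.1 ^ 2 + p.2 ^ 2 < r₁ ^ 2}
          ∩ {p | (p.1 - h) ^ 2 + p.2 ^ 2 < r₂ ^ 2}) := by
  rw [EuclideanSpace.ball_fin_two hr₁, EuclideanSpace.ball_fin_two hr₂, ← Set.preimage_inter,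
    EuclideanSpace.measurePreserving_finTwo.measure_preimage (by measurability)]
  simp

/-- The lens-area formula: for two overlapping disks in the Euclidean plane whose
centers are at distance `h` with `|r₁ - r₂| < h < r₁ + r₂`, the area of their
intersection is `r₁²(φ₁ - sin(2φ₁)/2) + r₂²(φ₂ - sin(2φ₂)/2)` with the angles `φᵢ`
given by the arccosines below. -/
theorem lens_area_formula
    (s₁ s₂ : EuclideanSpace ℝ (Fin 2)) (h r₁ r₂ : ℝ)
    (hd : dist s₁ s₂ = h) (hr1 : 0 < r₁) (hr2 : 0 < r₂)
    (hlow : |r₁ - r₂| < h) (hup : h < r₁ + r₂) :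
    volume (ball s₁ r₁ ∩ ball s₂ r₂)
      = ENNReal.ofReal
        (r₁ ^ 2 * (Real.arccos ((h ^ 2 + r₁ ^ 2 - r₂ ^ 2) / (2 * h * r₁))
            - (1 / 2) * Real.sin (2 * Real.arccos ((h ^ 2 + r₁ ^ 2 - r₂ ^ 2) / (2 * h * r₁))))
          + r₂ ^ 2 * (Real.arccos ((h ^ 2 + r₂ ^ 2 - r₁ ^ 2) / (2 * h * r₂))
            - (1 / 2) * Real.sin (2 * Real.arccos ((h ^ 2 + r₂ ^ 2 - r₁ ^ 2) / (2 * h * r₂))))) := by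
  have hh : 0 < h := (abs_nonneg _).trans_lt hlow
  have hv : ‖EuclideanSpace.single (0 : Fin 2) h‖ = dist s₁ s₂ := by
    rw [PiLp.norm_single, norm_of_nonneg hh.le, hd]
  rw [volume_ball_inter_ball_eq_of_norm_eq hv, volume_ball_zero_inter_ball_single hr1 hr2,
    volume_disk_inter_disk hh hr1 hr2 hlow.le hup.le,
    ← ENNReal.ofReal_add (circularSegmentArea_nonneg _ _) (circularSegmentArea_nonneg _ _)]
  rfl
end

section
/- Let μ be a probability measure on a measurable space and let m be a measurable function with 0 ≤ m ≤ 1 μ-almost everywhere. Then lim_{u→1⁻} (1 − 2u + ∫ u^{2−m} dμ)/(1 − u) = ∫ m dμ. (This identifies the upper tail-dependence coefficient λ_U of the mixture copula whose diagonal is C(u, u) = ∫ u^{2−min{δ₁,δ₂}} dμ as λ_U = ∫ min{δ₁, δ₂} dμ, as in equation (eq-lam-srho) of the paper with m = min{δ₁, δ₂}.) -/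
open MeasureTheory Filter Real Set Topology

/-! Writing `f(u) = 1 - 2u + u^{2-c}`, one has `f(1) = 0`, so `f(u)/(1-u) → -f'(1) = c`
as `u → 1⁻`. For `u ∈ (0,1)` and `c ∈ [0,1]` the bounds `u² ≤ u^{2-c} ≤ u` put `f(u)/(1-u)`
in `[0,1]`, so with `c = m x` dominated convergence passes the limit under the integral. -/

lemma tendsto_one_sub_two_mul_add_rpow_div (c : ℝ) :
    Tendsto (fun u : ℝ => (1 - 2 * u + u ^ (2 - c)) / (1 - u)) (𝓝[<] 1) (𝓝 c) := by
  set f : ℝ → ℝ := fun u => 1 - 2 * u + u ^ (2 - c)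
  have hf : HasDerivAt f (-c) 1 := by
    have hpow := Real.hasDerivAt_rpow_const (x := 1) (p := 2 - c) (Or.inl one_ne_zero)
    refine ((((hasDerivAt_id (1 : ℝ)).const_mul 2).const_sub 1).add hpow).congr_deriv ?_
    rw [one_rpow]
    ring
  have hslope := (hf.tendsto_slope.mono_left (nhdsLT_le_nhdsNE 1)).neg
  rw [neg_neg] at hslope
  refine hslope.congr' (.of_forall fun u => ?_)
  have hf1 : f 1 = 0 := by norm_num [f]
  rw [slope_def_field, hf1, sub_zero, ← neg_sub 1 u, div_neg, neg_neg]

lemma one_sub_two_mul_add_rpow_div_mem_Icc {u c : ℝ} (hu : u ∈ Ioo 0 1) (hc : c ∈ Icc 0 1) :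
    (1 - 2 * u + u ^ (2 - c)) / (1 - u) ∈ Icc 0 1 := by
  obtain ⟨hu0, hu1⟩ := hu
  have hsq : u ^ (2 : ℝ) ≤ u ^ (2 - c) :=
    rpow_le_rpow_of_exponent_ge hu0 hu1.le (by linarith [hc.1])
  have hlin : u ^ (2 - c) ≤ u ^ (1 : ℝ) :=
    rpow_le_rpow_of_exponent_ge hu0 hu1.le (by linarith [hc.2])
  rw [rpow_two] at hsq
  rw [rpow_one] at hlin
  have h1u : 0 < 1 - u := by linarith
  exact ⟨div_nonneg (by nlinarith) h1u.le, (div_le_one h1u).mpr (by linarith)⟩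

/-- The upper tail-dependence coefficient of the mixture copula with diagonal
`C(u,u) = ∫ u^{2-m} dμ`: one has `(1 - 2u + ∫ u^{2-m} dμ)/(1-u) → ∫ m dμ` as `u → 1⁻`. -/
theorem mixture_copula_upper_tail_coefficient
    {α : Type*} [MeasurableSpace α] (μ : Measure α) [IsProbabilityMeasure μ]
    (m : α → ℝ) (hm : Measurable m) (h01 : ∀ᵐ x ∂μ, 0 ≤ m x ∧ m x ≤ 1) :
    Tendsto (fun u : ℝ => (1 - 2 * u + ∫ x, u ^ (2 - m x) ∂μ) / (1 - u))
      (nhdsWithin 1 (Set.Iio 1)) (nhds (∫ x, m x ∂μ)) := by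
  have hu : ∀ᶠ u in 𝓝[<] (1 : ℝ), u ∈ Ioo 0 1 := Ioo_mem_nhdsLT one_pos
  have hlim : Tendsto (fun u => ∫ x, (1 - 2 * u + u ^ (2 - m x)) / (1 - u) ∂μ) (𝓝[<] 1)
      (𝓝 (∫ x, m x ∂μ)) := by
    refine tendsto_integral_filter_of_dominated_convergence 1
      (.of_forall fun u => (by fun_prop : Measurable _).aestronglyMeasurable) ?_
      (integrable_const 1)
      (.of_forall fun x => tendsto_one_sub_two_mul_add_rpow_div (m x))
    filter_upwards [hu] with u hu
    filter_upwards [h01] with x hx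
    have hmem := one_sub_two_mul_add_rpow_div_mem_Icc hu hx
    rw [Pi.one_apply, norm_of_nonneg hmem.1]
    exact hmem.2
  refine hlim.congr' ?_
  filter_upwards [hu] with u ⟨hu0, hu1⟩
  have hint : Integrable (fun x => u ^ (2 - m x)) μ := by
    refine (integrable_const 1).mono' (by fun_prop : Measurable _).aestronglyMeasurable ?_
    filter_upwards [h01] with x hx
    rw [norm_of_nonneg (rpow_nonneg hu0.le _)]
    exact rpow_le_one hu0.le hu1.le (by linarith [hx.2])
  rw [integral_div, integral_add (integrable_const _) hint, integral_const, probReal_univ, one_smul]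
end

section
/- Let s₁, s₂ ∈ ℝ² with ‖s₁ − s₂‖ = h > 0, let r_U > 0, and for radii r₁, r₂ ∈ (0, r_U] set δ_i(r₁, r₂; h) = A₁₂(r₁, r₂; h)/(π r_i²) for i = 1, 2, where A₁₂(r₁, r₂; h) is the Lebesgue area of B(s₁, r₁) ∩ B(s₂, r₂). Then min{δ₁(r₁, r₂; h), δ₂(r₁, r₂; h)} ≤ δ₁(r_U, r_U; h) = A₁₂(r_U, r_U; h)/(π r_U²). In particular, the supremum over (r₁, r₂) ∈ (0, r_U]² of min{δ₁, δ₂} is attained at r₁ = r₂ = r_U. -/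
/-!
Put `r = max r₁ r₂`. The smaller of the two overlap fractions is the one normalised by `π r²`, and
the lens only grows when both radii are raised to `r`, so it suffices to show that
`r ↦ A₁₂(r, r; h) / r²` is nondecreasing. Scaling by `k = r_U / r ≥ 1` turns the lens of radius
`r` and centre distance `h` into one of radius `r_U` and centre distance `k h`, multiplying its
area by `k²`; and pulling two balls of equal radius apart only shrinks their intersection, since
the wider lens is contained in a translate of the narrower one.
-/

open MeasureTheory Metric Real Module

section Segment

variable {E : Type*} [NormedAddCommGroup E] [NormedSpace ℝ E]

theorem ball_inter_ball_subset_of_mem_segment {a b c d : E} {R : ℝ}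
    (hc : c ∈ segment ℝ a b) (hd : d ∈ segment ℝ a b) :
    ball a R ∩ ball b R ⊆ ball c R ∩ ball d R := by
  rintro x ⟨ha, hb⟩
  have hsub := (convex_ball x R).segment_subset (mem_ball_comm.1 ha) (mem_ball_comm.1 hb)
  exact ⟨mem_ball_comm.1 (hsub hc), mem_ball_comm.1 (hsub hd)⟩

theorem smul_mem_segment_zero_smul {t k : ℝ} (ht : 0 ≤ t) (htk : t ≤ k) (w : E) :
    t • w ∈ segment ℝ 0 (k • w) := by
  rcases ht.eq_or_lt with rfl | ht
  · simpa using left_mem_segment ℝ (0 : E) (k • w)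
  have hk : 0 < k := ht.trans_le htk
  refine ⟨1 - t / k, t / k, by linarith [div_le_one_of_le₀ htk hk.le], by positivity,
    by ring, ?_⟩
  rw [smul_zero, zero_add, smul_smul, div_mul_cancel₀ _ hk.ne']

end Segment

section Lens

variable {E : Type*} [NormedAddCommGroup E] [MeasurableSpace E] [BorelSpace E] (μ : Measure E)

theorem measure_ball_inter_ball_eq_zero_sub [μ.IsAddLeftInvariant] (a b : E) (R : ℝ) :
    μ (ball a R ∩ ball b R) = μ (ball 0 R ∩ ball (b - a) R) := by
  rw [← measure_preimage_add μ a, Set.preimage_inter, preimage_add_left_ball,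
    preimage_add_left_ball, neg_add_cancel, neg_add_eq_sub]

variable [NormedSpace ℝ E]

theorem measure_ball_inter_ball_smul_le [μ.IsAddLeftInvariant] {k : ℝ} (hk : 1 ≤ k)
    (w : E) (R : ℝ) :
    μ (ball 0 R ∩ ball (k • w) R) ≤ μ (ball 0 R ∩ ball w R) := by
  -- the lens with centres `0, w`, translated to the middle of the segment `[0, k • w]`
  set c : E := ((k - 1) / 2) • w
  have hc : c ∈ segment ℝ 0 (k • w) := smul_mem_segment_zero_smul (by linarith) (by linarith) w
  have hcw : c + w ∈ segment ℝ 0 (k • w) := by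
    rw [← one_smul ℝ w, ← add_smul, one_smul]
    exact smul_mem_segment_zero_smul (by linarith) (by linarith) w
  calc μ (ball 0 R ∩ ball (k • w) R) ≤ μ (ball c R ∩ ball (c + w) R) :=
        measure_mono (ball_inter_ball_subset_of_mem_segment hc hcw)
    _ = μ (ball 0 R ∩ ball w R) := by
        rw [measure_ball_inter_ball_eq_zero_sub, add_sub_cancel_left]

theorem measure_ball_inter_ball_smul [FiniteDimensional ℝ E] [μ.IsAddHaarMeasure] {k : ℝ}
    (hk : 0 < k) (w : E) (r : ℝ) :
    μ (ball 0 (k * r) ∩ ball (k • w) (k * r))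
      = ENNReal.ofReal (k ^ finrank ℝ E) * μ (ball 0 r ∩ ball w r) := by
  have hscale := Measure.addHaar_smul μ k (ball 0 r ∩ ball w r)
  rwa [Set.smul_set_inter₀ hk.ne', _root_.smul_ball hk.ne', _root_.smul_ball hk.ne', smul_zero,
    Real.norm_of_nonneg hk.le, abs_of_pos (pow_pos hk _)] at hscale

theorem measure_ball_inter_ball_div_pow_le [FiniteDimensional ℝ E] [μ.IsAddHaarMeasure]
    (a b : E) {r R : ℝ} (hr : 0 < r) (hrR : r ≤ R) :
    (μ (ball a r ∩ ball b r)).toReal / r ^ finrank ℝ E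
      ≤ (μ (ball a R ∩ ball b R)).toReal / R ^ finrank ℝ E := by
  set k := R / r
  have hk : 1 ≤ k := (one_le_div hr).2 hrR
  have hkr : k * r = R := div_mul_cancel₀ R hr.ne'
  have hscaled : ENNReal.ofReal (k ^ finrank ℝ E) * μ (ball a r ∩ ball b r)
      ≤ μ (ball a R ∩ ball b R) := by
    rw [measure_ball_inter_ball_eq_zero_sub μ a b r, measure_ball_inter_ball_eq_zero_sub μ a b R,
      ← measure_ball_inter_ball_smul μ (zero_lt_one.trans_le hk), hkr]
    exact measure_ball_inter_ball_smul_le μ hk _ R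
  have hfin : μ (ball a R ∩ ball b R) ≠ ⊤ :=
    (measure_inter_lt_top_of_left_ne_top measure_ball_lt_top.ne).ne
  have hreal := ENNReal.toReal_mono hfin hscaled
  rw [ENNReal.toReal_mul, ENNReal.toReal_ofReal (by positivity)] at hreal
  have hRpow : R ^ finrank ℝ E = k ^ finrank ℝ E * r ^ finrank ℝ E := by rw [← hkr, mul_pow]
  rw [div_le_div_iff₀ (by positivity) (by rw [hRpow]; positivity), hRpow]
  nlinarith [pow_pos hr (finrank ℝ E)]

end Lens

theorem min_overlap_fraction_le_general
    (s₁ s₂ : EuclideanSpace ℝ (Fin 2)) (rU : ℝ)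
    (r₁ r₂ : ℝ) (hr1 : r₁ ∈ Set.Ioc (0 : ℝ) rU) (hr2 : r₂ ∈ Set.Ioc (0 : ℝ) rU) :
    min ((volume (ball s₁ r₁ ∩ ball s₂ r₂)).toReal / (π * r₁ ^ 2))
        ((volume (ball s₁ r₁ ∩ ball s₂ r₂)).toReal / (π * r₂ ^ 2))
      ≤ (volume (ball s₁ rU ∩ ball s₂ rU)).toReal / (π * rU ^ 2) := by
  obtain ⟨hr₁, hr₁U⟩ := hr1
  obtain ⟨hr₂, hr₂U⟩ := hr2
  set r := max r₁ r₂ with hr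
  have hmono := measure_ball_inter_ball_div_pow_le volume s₁ s₂ (lt_max_of_lt_left hr₁)
    (max_le hr₁U hr₂U)
  rw [finrank_euclideanSpace_fin] at hmono
  calc _ ≤ (volume (ball s₁ r₁ ∩ ball s₂ r₂)).toReal / (π * r ^ 2) := by
        rcases max_choice r₁ r₂ with h | h <;> rw [hr, h]
        exacts [min_le_left _ _, min_le_right _ _]
    _ ≤ (volume (ball s₁ r ∩ ball s₂ r)).toReal / (π * r ^ 2) := by
        gcongr
        exacts [(measure_inter_lt_top_of_left_ne_top measure_ball_lt_top.ne).ne,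
          le_max_left _ _, le_max_right _ _]
    _ = (volume (ball s₁ r ∩ ball s₂ r)).toReal / r ^ 2 / π := by rw [mul_comm, div_div]
    _ ≤ (volume (ball s₁ rU ∩ ball s₂ rU)).toReal / rU ^ 2 / π := by gcongr
    _ = _ := by rw [div_div, mul_comm]

/-- The overlap fractions `δᵢ(r₁,r₂;h) = A₁₂(r₁,r₂;h)/(π rᵢ²)` satisfy
`min{δ₁, δ₂} ≤ δ₁(r_U, r_U; h)` for all radii `r₁, r₂ ∈ (0, r_U]`; i.e. the supremum of
`min{δ₁, δ₂}` over `(0, r_U]²` is attained at `r₁ = r₂ = r_U`. -/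
theorem min_overlap_fraction_le
    (s₁ s₂ : EuclideanSpace ℝ (Fin 2)) (h rU : ℝ)
    (hd : dist s₁ s₂ = h) (hh : 0 < h) (hrU : 0 < rU)
    (r₁ r₂ : ℝ) (hr1 : r₁ ∈ Set.Ioc (0 : ℝ) rU) (hr2 : r₂ ∈ Set.Ioc (0 : ℝ) rU) :
    min ((volume (ball s₁ r₁ ∩ ball s₂ r₂)).toReal / (π * r₁ ^ 2))
        ((volume (ball s₁ r₁ ∩ ball s₂ r₂)).toReal / (π * r₂ ^ 2))
      ≤ (volume (ball s₁ rU ∩ ball s₂ rU)).toReal / (π * rU ^ 2) :=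
  min_overlap_fraction_le_general s₁ s₂ rU r₁ r₂ hr1 hr2
end

section
/- Let 0 ≤ r_L < r_U, h > 0, K₀ > 0, and let μ be a probability measure on ℝ² concentrated on {(r₁, r₂) : r_L ≤ r₁ ≤ r_U, r_L ≤ r₂ ≤ r_U, r₁ > 0, r₂ > 0} such that μ({(r₁, r₂) : |r₁ − r₂| > h}) ≥ K₀. Fix s₁, s₂ ∈ ℝ² with ‖s₁ − s₂‖ = h and set δ_i(r₁, r₂; h) = A₁₂(r₁, r₂; h)/(π r_i²), where A₁₂(r₁, r₂; h) is the Lebesgue area of B(s₁, r₁) ∩ B(s₂, r₂). Then λ_U(h) := ∫ min{δ₁(r₁, r₂; h), δ₂(r₁, r₂; h)} dμ(r₁, r₂) ≤ 1 − K₀·h·(2r_L + h)/r_U². (Proposition 2 of the paper.) -/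
open MeasureTheory Metric Real

/-!
If `|r₁ - r₂| > h = ‖s₁ - s₂‖`, the smaller disk lies inside the larger one, so the overlap is
the whole smaller disk and `min{δ₁, δ₂} = (r_min / r_max)²`; as `r_max - r_min > h` and
`r_min ≥ r_L`, this is at most `1 - h (2 r_L + h) / r_U²`. Elsewhere `min{δ₁, δ₂} ≤ 1`, and
integrating the two bounds against `μ` gives the claim.
-/

section Integral

variable {α : Type*} [MeasurableSpace α] {μ : Measure α} [IsProbabilityMeasure μ]

theorem integral_le_one_sub_mul_of_le_on {f : α → ℝ} {G : Set α} {c K : ℝ}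
    (hG : MeasurableSet G) (hc : 0 ≤ c) (hK : K ≤ μ.real G) (hf₀ : ∀ᵐ x ∂μ, 0 ≤ f x)
    (hf : ∀ᵐ x ∂μ, f x ≤ 1) (hfG : ∀ᵐ x ∂μ, x ∈ G → f x ≤ 1 - c) :
    ∫ x, f x ∂μ ≤ 1 - c * K := by
  have hg : Integrable (fun x ↦ 1 - G.indicator (fun _ ↦ c) x) μ :=
    (integrable_const 1).sub ((integrable_const c).indicator hG)
  have hfg : ∀ᵐ x ∂μ, f x ≤ 1 - G.indicator (fun _ ↦ c) x := by
    filter_upwards [hf, hfG] with x hx hxG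
    by_cases hx' : x ∈ G
    · simpa [Set.indicator_of_mem hx'] using hxG hx'
    · simpa [Set.indicator_of_notMem hx'] using hx
  calc ∫ x, f x ∂μ ≤ ∫ x, (1 - G.indicator (fun _ ↦ c) x) ∂μ :=
        integral_mono_of_nonneg hf₀ hg hfg
    _ = 1 - c * μ.real G := by
        rw [integral_sub (integrable_const 1) ((integrable_const c).indicator hG),
          integral_const, integral_indicator_const _ hG]
        simp [mul_comm]
    _ ≤ 1 - c * K := by gcongr

end Integral

theorem sq_div_sq_le_one_sub {a b h rL rU : ℝ} (hrL : 0 ≤ rL) (hh : 0 ≤ h) (hb : rL ≤ b)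
    (ha : a ≤ rU) (hab : h < a - b) :
    b ^ 2 / a ^ 2 ≤ 1 - h * (2 * rL + h) / rU ^ 2 := by
  have ha₀ : 0 < a := by linarith
  have hgap : h * (2 * rL + h) ≤ a ^ 2 - b ^ 2 := by nlinarith
  have hsq : a ^ 2 ≤ rU ^ 2 := by gcongr
  calc b ^ 2 / a ^ 2 = 1 - (a ^ 2 - b ^ 2) / a ^ 2 := by field_simp; ring
    _ ≤ 1 - h * (2 * rL + h) / rU ^ 2 := by
        gcongr
        nlinarith

namespace EuclideanSpace

theorem measureReal_ball_fin_two (x : EuclideanSpace ℝ (Fin 2)) {r : ℝ} (hr : 0 ≤ r) :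
    volume.real (ball x r) = π * r ^ 2 := by
  rw [measureReal_def, volume_ball_fin_two, ENNReal.toReal_mul, ENNReal.toReal_pow,
    ENNReal.toReal_ofReal hr, ENNReal.toReal_ofReal pi_pos.le, mul_comm]

end EuclideanSpace

noncomputable def overlapArea (s₁ s₂ : EuclideanSpace ℝ (Fin 2)) (r₁ r₂ : ℝ) : ℝ :=
  volume.real (ball s₁ r₁ ∩ ball s₂ r₂)

/-- `min{δ₁, δ₂}` in the notation of the paper. -/
noncomputable def minOverlapFraction (s₁ s₂ : EuclideanSpace ℝ (Fin 2)) (r₁ r₂ : ℝ) : ℝ :=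
  min (overlapArea s₁ s₂ r₁ r₂ / (π * r₁ ^ 2)) (overlapArea s₁ s₂ r₁ r₂ / (π * r₂ ^ 2))

namespace minOverlapFraction

variable {s₁ s₂ : EuclideanSpace ℝ (Fin 2)} {r₁ r₂ : ℝ}

theorem comm : minOverlapFraction s₂ s₁ r₂ r₁ = minOverlapFraction s₁ s₂ r₁ r₂ := by
  simp only [minOverlapFraction, overlapArea, Set.inter_comm, min_comm]

theorem nonneg : 0 ≤ minOverlapFraction s₁ s₂ r₁ r₂ :=
  le_min (by unfold overlapArea; positivity) (by unfold overlapArea; positivity)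

theorem le_one (hr₁ : 0 < r₁) : minOverlapFraction s₁ s₂ r₁ r₂ ≤ 1 := by
  refine (min_le_left _ _).trans ((div_le_one (by positivity)).mpr ?_)
  calc overlapArea s₁ s₂ r₁ r₂ ≤ volume.real (ball s₁ r₁) :=
        measureReal_mono Set.inter_subset_left measure_ball_lt_top.ne
    _ = π * r₁ ^ 2 := EuclideanSpace.measureReal_ball_fin_two s₁ hr₁.le

theorem le_sq_div_sq_of_add_dist_le (hr₂ : 0 ≤ r₂) (hnest : r₂ + dist s₁ s₂ ≤ r₁) :
    minOverlapFraction s₁ s₂ r₁ r₂ ≤ r₂ ^ 2 / r₁ ^ 2 := by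
  have hsub : ball s₂ r₂ ⊆ ball s₁ r₁ := ball_subset_ball' (by rwa [dist_comm])
  refine (min_le_left _ _).trans_eq ?_
  rw [overlapArea, Set.inter_eq_right.mpr hsub, EuclideanSpace.measureReal_ball_fin_two s₂ hr₂,
    mul_div_mul_left _ _ pi_pos.ne']

theorem le_one_sub_of_dist_lt_abs_sub {rL rU : ℝ} (hrL : 0 ≤ rL)
    (h₁ : 0 < r₁ ∧ rL ≤ r₁ ∧ r₁ ≤ rU) (h₂ : 0 < r₂ ∧ rL ≤ r₂ ∧ r₂ ≤ rU)
    (hgap : dist s₁ s₂ < |r₁ - r₂|) :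
    minOverlapFraction s₁ s₂ r₁ r₂ ≤ 1 - dist s₁ s₂ * (2 * rL + dist s₁ s₂) / rU ^ 2 := by
  wlog h₂₁ : r₂ < r₁ generalizing s₁ s₂ r₁ r₂
  · rw [← comm, dist_comm]
    refine this h₂ h₁ ?_ ?_
    · rwa [abs_sub_comm, dist_comm]
    · rcases lt_abs.mp hgap with h | h <;> linarith [dist_nonneg (x := s₁) (y := s₂)]
  rw [abs_of_pos (sub_pos.mpr h₂₁)] at hgap
  exact (le_sq_div_sq_of_add_dist_le h₂.1.le (by linarith)).trans
    (sq_div_sq_le_one_sub hrL dist_nonneg h₂.2.1 h₁.2.2 hgap)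

end minOverlapFraction

theorem lambdaU_upper_bound_general
    (s₁ s₂ : EuclideanSpace ℝ (Fin 2)) (h rL rU K₀ : ℝ)
    (hd : dist s₁ s₂ = h) (hrL : 0 ≤ rL)
    (μ : Measure (ℝ × ℝ)) [IsProbabilityMeasure μ]
    (hsupp : ∀ᵐ p ∂μ, 0 < p.1 ∧ 0 < p.2 ∧ rL ≤ p.1 ∧ p.1 ≤ rU ∧ rL ≤ p.2 ∧ p.2 ≤ rU)
    (hgap : ENNReal.ofReal K₀ ≤ μ {p : ℝ × ℝ | h < |p.1 - p.2|}) :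
    (∫ p : ℝ × ℝ,
        min ((volume (ball s₁ p.1 ∩ ball s₂ p.2)).toReal / (π * p.1 ^ 2))
            ((volume (ball s₁ p.1 ∩ ball s₂ p.2)).toReal / (π * p.2 ^ 2)) ∂μ)
      ≤ 1 - K₀ * h * (2 * rL + h) / rU ^ 2 := by
  subst hd
  have hG : MeasurableSet {p : ℝ × ℝ | dist s₁ s₂ < |p.1 - p.2|} :=
    measurableSet_lt measurable_const (by fun_prop)
  have hK : K₀ ≤ μ.real {p : ℝ × ℝ | dist s₁ s₂ < |p.1 - p.2|} :=
    (ENNReal.ofReal_le_iff_le_toReal (measure_ne_top _ _)).mp hgap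
  calc _ = ∫ p, minOverlapFraction s₁ s₂ p.1 p.2 ∂μ := rfl
    _ ≤ 1 - dist s₁ s₂ * (2 * rL + dist s₁ s₂) / rU ^ 2 * K₀ := by
        refine integral_le_one_sub_mul_of_le_on hG (by positivity) hK
          (.of_forall fun _ ↦ minOverlapFraction.nonneg) ?_ ?_
        · filter_upwards [hsupp] with p hp using minOverlapFraction.le_one hp.1
        · filter_upwards [hsupp] with p ⟨h₁, h₂, hL₁, hU₁, hL₂, hU₂⟩ hpG
          exact minOverlapFraction.le_one_sub_of_dist_lt_abs_sub hrL ⟨h₁, hL₁, hU₁⟩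
            ⟨h₂, hL₂, hU₂⟩ hpG
    _ = _ := by ring

/-- Proposition 2: if the joint law `μ` of the two random radii is concentrated on
`[r_L, r_U]² ∩ (0,∞)²` and gives mass at least `K₀` to `{|r₁ - r₂| > h}`, then the
upper tail-dependence coefficient `λ_U(h) = ∫ min{δ₁, δ₂} dμ` satisfies
`λ_U(h) ≤ 1 - K₀ h (2 r_L + h)/r_U²`. -/
theorem lambdaU_upper_bound
    (s₁ s₂ : EuclideanSpace ℝ (Fin 2)) (h rL rU K₀ : ℝ)
    (hd : dist s₁ s₂ = h) (hh : 0 < h) (hrL : 0 ≤ rL) (hLU : rL < rU) (hK : 0 < K₀)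
    (μ : Measure (ℝ × ℝ)) [IsProbabilityMeasure μ]
    (hsupp : ∀ᵐ p ∂μ, 0 < p.1 ∧ 0 < p.2 ∧ rL ≤ p.1 ∧ p.1 ≤ rU ∧ rL ≤ p.2 ∧ p.2 ≤ rU)
    (hgap : ENNReal.ofReal K₀ ≤ μ {p : ℝ × ℝ | h < |p.1 - p.2|}) :
    (∫ p : ℝ × ℝ,
        min ((volume (ball s₁ p.1 ∩ ball s₂ p.2)).toReal / (π * p.1 ^ 2))
            ((volume (ball s₁ p.1 ∩ ball s₂ p.2)).toReal / (π * p.2 ^ 2)) ∂μ)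
      ≤ 1 - K₀ * h * (2 * rL + h) / rU ^ 2 :=
  lambdaU_upper_bound_general s₁ s₂ h rL rU K₀ hd hrL μ hsupp hgap
end

section
/- Let β > 1, q ∈ (0, 1), a ≥ 0, b ≥ 0, and let Z₁, Z₂, Y₁, Y₂ be nonnegative random variables on a probability space such that the pair (Z₁, Z₂) is independent of the pair (Y₁, Y₂), and such that, as z → ∞: z·P(Z_i > z) → 1 for i = 1, 2; z^β·P(Y_i > z) → 1 for i = 1, 2; z·P(Z₁ > z, Z₂ > z) → a; and z^β·P(Y₁ > z, Y₂ > z) → b. Then z·P(max{qZ₁, (1−q)Y₁} > z, max{qZ₂, (1−q)Y₂} > z) → q·a as z → ∞. (Thus for β > 1 the max-mixture has the same upper tail-dependence coefficient as the max-convolution component: λ̃_U = λ_U^Z.) -/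
/-!
For `β > 1` the `Y`-component is invisible at the rate `z`:
`z P(Yᵢ > z/(1-q)) ~ (1-q)^β z^(1-β) → 0`. So the joint exceedance of the mixture
is squeezed between `P(Z₁ > z/q, Z₂ > z/q)` (both maxima
attained by the `Z`-part) and that probability plus the two marginal `Y`-tails (union bound),
and both bounds, multiplied by `z`, tend to `q a`.
-/

open MeasureTheory Filter Real ProbabilityTheory

open scoped Topology

lemma tendsto_mul_of_tendsto_rpow_mul {f : ℝ → ℝ} {β L : ℝ} (hβ : 1 < β)
    (hf : Tendsto (fun z => z ^ β * f z) atTop (𝓝 L)) :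
    Tendsto (fun z => z * f z) atTop (𝓝 0) := by
  have hdecay : Tendsto (fun z : ℝ => z ^ (1 - β)) atTop (𝓝 0) := by
    simpa [neg_sub] using tendsto_rpow_neg_atTop (by linarith : 0 < β - 1)
  refine (by simpa using hdecay.mul hf : Tendsto (fun z => z ^ (1 - β) * (z ^ β * f z))
    atTop (𝓝 0)).congr' ?_
  filter_upwards [eventually_gt_atTop 0] with z hz
  rw [← mul_assoc, ← rpow_add hz, sub_add_cancel, rpow_one]

lemma tendsto_mul_comp_div_const {f : ℝ → ℝ} {c L : ℝ} (hc : 0 < c)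
    (hf : Tendsto (fun z => z * f z) atTop (𝓝 L)) :
    Tendsto (fun z => z * f (z / c)) atTop (𝓝 (c * L)) := by
  refine ((hf.comp (tendsto_id.atTop_div_const hc)).const_mul c).congr fun z => ?_
  simp only [Function.comp_apply, id]
  field_simp

def maxMixture {Ω : Type*} (q : ℝ) (Z Y : Ω → ℝ) (ω : Ω) : ℝ :=
  max (q * Z ω) ((1 - q) * Y ω)

section MaxMixture

variable {Ω : Type*} (Z₁ Z₂ Y₁ Y₂ : Ω → ℝ) {q z : ℝ}

lemma setOf_lt_div_subset_maxMixture (hq : 0 < q) :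
    {ω | z / q < Z₁ ω ∧ z / q < Z₂ ω} ⊆
      {ω | z < maxMixture q Z₁ Y₁ ω ∧ z < maxMixture q Z₂ Y₂ ω} := by
  rintro ω ⟨h₁, h₂⟩
  exact ⟨lt_max_of_lt_left ((div_lt_iff₀' hq).mp h₁),
    lt_max_of_lt_left ((div_lt_iff₀' hq).mp h₂)⟩

lemma setOf_maxMixture_subset_union (hq : 0 < q) (hq₁ : q < 1) :
    {ω | z < maxMixture q Z₁ Y₁ ω ∧ z < maxMixture q Z₂ Y₂ ω} ⊆
      {ω | z / q < Z₁ ω ∧ z / q < Z₂ ω} ∪ {ω | z / (1 - q) < Y₁ ω} ∪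
        {ω | z / (1 - q) < Y₂ ω} := by
  have hq' : 0 < 1 - q := sub_pos.mpr hq₁
  rintro ω ⟨h₁, h₂⟩
  rcases lt_max_iff.mp h₁ with h₁ | h₁
  · rcases lt_max_iff.mp h₂ with h₂ | h₂
    · exact Or.inl (Or.inl ⟨(div_lt_iff₀' hq).mpr h₁, (div_lt_iff₀' hq).mpr h₂⟩)
    · exact Or.inr ((div_lt_iff₀' hq').mpr h₂)
  · exact Or.inl (Or.inr ((div_lt_iff₀' hq').mpr h₁))

variable [MeasurableSpace Ω] (P : Measure Ω) [IsFiniteMeasure P]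

lemma measureReal_lt_div_le_maxMixture (hq : 0 < q) :
    P.real {ω | z / q < Z₁ ω ∧ z / q < Z₂ ω} ≤
      P.real {ω | z < maxMixture q Z₁ Y₁ ω ∧ z < maxMixture q Z₂ Y₂ ω} :=
  measureReal_mono (setOf_lt_div_subset_maxMixture Z₁ Z₂ Y₁ Y₂ hq)

lemma measureReal_maxMixture_le (hq : 0 < q) (hq₁ : q < 1) :
    P.real {ω | z < maxMixture q Z₁ Y₁ ω ∧ z < maxMixture q Z₂ Y₂ ω} ≤
      P.real {ω | z / q < Z₁ ω ∧ z / q < Z₂ ω} + P.real {ω | z / (1 - q) < Y₁ ω} +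
        P.real {ω | z / (1 - q) < Y₂ ω} :=
  (measureReal_mono (setOf_maxMixture_subset_union Z₁ Z₂ Y₁ Y₂ hq hq₁)).trans <|
    (measureReal_union_le _ _).trans (add_le_add_left (measureReal_union_le _ _) _)

end MaxMixture

theorem max_mixture_tail_dependence_beta_gt_one_general
    {Ω : Type*} [MeasurableSpace Ω] (P : Measure Ω) [IsProbabilityMeasure P]
    (β q a : ℝ) (hβ : 1 < β) (hq : q ∈ Set.Ioo (0 : ℝ) 1)
    (Z₁ Z₂ Y₁ Y₂ : Ω → ℝ)
    (hY₁ : Tendsto (fun z : ℝ => z ^ β * (P {ω | z < Y₁ ω}).toReal) atTop (nhds 1))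
    (hY₂ : Tendsto (fun z : ℝ => z ^ β * (P {ω | z < Y₂ ω}).toReal) atTop (nhds 1))
    (hZJ : Tendsto (fun z : ℝ => z * (P {ω | z < Z₁ ω ∧ z < Z₂ ω}).toReal) atTop (nhds a)) :
    Tendsto (fun z : ℝ => z * (P {ω | z < max (q * Z₁ ω) ((1 - q) * Y₁ ω)
        ∧ z < max (q * Z₂ ω) ((1 - q) * Y₂ ω)}).toReal) atTop (nhds (q * a)) := by
  obtain ⟨hq₀, hq₁⟩ := hq
  have hq' : 0 < 1 - q := sub_pos.mpr hq₁
  have hjoint := tendsto_mul_comp_div_const hq₀ hZJ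
  have htail₁ := tendsto_mul_comp_div_const hq' (tendsto_mul_of_tendsto_rpow_mul hβ hY₁)
  have htail₂ := tendsto_mul_comp_div_const hq' (tendsto_mul_of_tendsto_rpow_mul hβ hY₂)
  rw [mul_zero] at htail₁ htail₂
  have hupper := (hjoint.add htail₁).add htail₂
  rw [add_zero, add_zero] at hupper
  refine tendsto_of_tendsto_of_tendsto_of_le_of_le' hjoint hupper ?_ ?_ <;>
    filter_upwards [eventually_ge_atTop 0] with z hz
  · exact mul_le_mul_of_nonneg_left
      (measureReal_lt_div_le_maxMixture Z₁ Z₂ Y₁ Y₂ P hq₀) hz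
  · rw [← mul_add, ← mul_add]
    exact mul_le_mul_of_nonneg_left (measureReal_maxMixture_le Z₁ Z₂ Y₁ Y₂ P hq₀ hq₁) hz

/-- For `β > 1`, the max-mixture `max{q Zᵢ, (1-q) Yᵢ}` has the same upper
tail-dependence coefficient as the max-convolution component: its joint exceedance rate
satisfies `z P(both > z) → q a`. -/
theorem max_mixture_tail_dependence_beta_gt_one
    {Ω : Type*} [MeasurableSpace Ω] (P : Measure Ω) [IsProbabilityMeasure P]
    (β q a b : ℝ) (hβ : 1 < β) (hq : q ∈ Set.Ioo (0 : ℝ) 1) (ha : 0 ≤ a) (hb : 0 ≤ b)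
    (Z₁ Z₂ Y₁ Y₂ : Ω → ℝ)
    (hZ₁m : Measurable Z₁) (hZ₂m : Measurable Z₂) (hY₁m : Measurable Y₁) (hY₂m : Measurable Y₂)
    (hZ₁0 : ∀ ω, 0 ≤ Z₁ ω) (hZ₂0 : ∀ ω, 0 ≤ Z₂ ω) (hY₁0 : ∀ ω, 0 ≤ Y₁ ω) (hY₂0 : ∀ ω, 0 ≤ Y₂ ω)
    (hind : IndepFun (fun ω => (Z₁ ω, Z₂ ω)) (fun ω => (Y₁ ω, Y₂ ω)) P)
    (hZ₁ : Tendsto (fun z : ℝ => z * (P {ω | z < Z₁ ω}).toReal) atTop (nhds 1))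
    (hZ₂ : Tendsto (fun z : ℝ => z * (P {ω | z < Z₂ ω}).toReal) atTop (nhds 1))
    (hY₁ : Tendsto (fun z : ℝ => z ^ β * (P {ω | z < Y₁ ω}).toReal) atTop (nhds 1))
    (hY₂ : Tendsto (fun z : ℝ => z ^ β * (P {ω | z < Y₂ ω}).toReal) atTop (nhds 1))
    (hZJ : Tendsto (fun z : ℝ => z * (P {ω | z < Z₁ ω ∧ z < Z₂ ω}).toReal) atTop (nhds a))
    (hYJ : Tendsto (fun z : ℝ => z ^ β * (P {ω | z < Y₁ ω ∧ z < Y₂ ω}).toReal) atTop (nhds b)) :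
    Tendsto (fun z : ℝ => z * (P {ω | z < max (q * Z₁ ω) ((1 - q) * Y₁ ω)
        ∧ z < max (q * Z₂ ω) ((1 - q) * Y₂ ω)}).toReal) atTop (nhds (q * a)) :=
  max_mixture_tail_dependence_beta_gt_one_general P β q a hβ hq Z₁ Z₂ Y₁ Y₂ hY₁ hY₂ hZJ
end

section
/- Let 0 < β < 1, q ∈ (0, 1), a ≥ 0, b ≥ 0, and let Z₁, Z₂, Y₁, Y₂ be nonnegative random variables on a probability space such that the pair (Z₁, Z₂) is independent of the pair (Y₁, Y₂), and such that, as z → ∞: z·P(Z_i > z) → 1 for i = 1, 2; z^β·P(Y_i > z) → 1 for i = 1, 2; z·P(Z₁ > z, Z₂ > z) → a; and z^β·P(Y₁ > z, Y₂ > z) → b. Then z^β·P(max{qZ₁, (1−q)Y₁} > z, max{qZ₂, (1−q)Y₂} > z) → (1−q)^β·b as z → ∞. (Thus for β < 1 the tail-dependence of the max-mixture is governed entirely by the Y component: λ̃_U = λ_U^Y.) -/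
/-!
Write `E z` for the joint exceedance event of the max-mixture at level `z`. It contains the joint
exceedance of `(Y₁, Y₂)` at `z / (1 - q)` and is contained in that event together with
`{Z₁ > z / q}` and `{Z₂ > z / q}`. Scaled by `z^β`, the first event tends to `(1 - q)^β b`, while
each `Z`-event is `z^(β - 1)` times a bounded quantity, which vanishes because `β < 1`.
-/

open MeasureTheory Filter Real ProbabilityTheory Topology

section RegularVariation

variable {f : ℝ → ℝ} {β c : ℝ}

theorem tendsto_rpow_mul_comp_div {s : ℝ} (hs : 0 < s)
    (h : Tendsto (fun z => z ^ β * f z) atTop (𝓝 c)) :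
    Tendsto (fun z => z ^ β * f (z / s)) atTop (𝓝 (s ^ β * c)) := by
  refine ((h.comp (tendsto_id.atTop_div_const hs)).const_mul (s ^ β)).congr' ?_
  filter_upwards [eventually_ge_atTop 0] with z hz
  simp only [Function.comp_apply, id]
  rw [← mul_assoc, ← mul_rpow hs.le (div_nonneg hz hs.le), mul_div_cancel₀ _ hs.ne']

theorem tendsto_rpow_mul_of_tendsto_mul (hβ : β < 1)
    (h : Tendsto (fun z => z * f z) atTop (𝓝 c)) :
    Tendsto (fun z => z ^ β * f z) atTop (𝓝 0) := by
  have hpow : Tendsto (fun z : ℝ => z ^ (β - 1)) atTop (𝓝 0) := by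
    simpa only [neg_sub] using tendsto_rpow_neg_atTop (sub_pos.mpr hβ)
  refine (zero_mul c ▸ hpow.mul h).congr' ?_
  filter_upwards [eventually_gt_atTop 0] with z hz
  rw [← mul_assoc, ← rpow_add_one hz.ne', sub_add_cancel]

end RegularVariation

section MaxMixture

variable {Ω : Type*} {s t z : ℝ} {X₁ X₂ Y₁ Y₂ : Ω → ℝ}

theorem lt_max_mul_iff (hs : 0 < s) (ht : 0 < t) {x y : ℝ} :
    z < max (s * x) (t * y) ↔ z / s < x ∨ z / t < y := by
  rw [lt_max_iff, div_lt_iff₀' hs, div_lt_iff₀' ht]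

theorem setOf_div_lt_subset_setOf_lt_max (hs : 0 < s) (ht : 0 < t) :
    {ω | z / t < Y₁ ω ∧ z / t < Y₂ ω} ⊆
      {ω | z < max (s * X₁ ω) (t * Y₁ ω) ∧ z < max (s * X₂ ω) (t * Y₂ ω)} := by
  intro ω
  simp only [Set.mem_ofPred_eq, lt_max_mul_iff hs ht]
  tauto

theorem setOf_lt_max_subset_union (hs : 0 < s) (ht : 0 < t) :
    {ω | z < max (s * X₁ ω) (t * Y₁ ω) ∧ z < max (s * X₂ ω) (t * Y₂ ω)} ⊆
      {ω | z / t < Y₁ ω ∧ z / t < Y₂ ω} ∪ {ω | z / s < X₁ ω} ∪ {ω | z / s < X₂ ω} := by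
  intro ω
  simp only [Set.mem_union, Set.mem_ofPred_eq, lt_max_mul_iff hs ht]
  tauto

variable [MeasurableSpace Ω] (P : Measure Ω) [IsFiniteMeasure P]

theorem measureReal_setOf_div_lt_le (hs : 0 < s) (ht : 0 < t) :
    P.real {ω | z / t < Y₁ ω ∧ z / t < Y₂ ω} ≤
      P.real {ω | z < max (s * X₁ ω) (t * Y₁ ω) ∧ z < max (s * X₂ ω) (t * Y₂ ω)} :=
  measureReal_mono (setOf_div_lt_subset_setOf_lt_max hs ht)

theorem measureReal_setOf_lt_max_le (hs : 0 < s) (ht : 0 < t) :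
    P.real {ω | z < max (s * X₁ ω) (t * Y₁ ω) ∧ z < max (s * X₂ ω) (t * Y₂ ω)} ≤
      P.real {ω | z / t < Y₁ ω ∧ z / t < Y₂ ω} + P.real {ω | z / s < X₁ ω} +
        P.real {ω | z / s < X₂ ω} :=
  calc _ ≤ P.real ({ω | z / t < Y₁ ω ∧ z / t < Y₂ ω} ∪ {ω | z / s < X₁ ω} ∪
          {ω | z / s < X₂ ω}) := measureReal_mono (setOf_lt_max_subset_union hs ht)
    _ ≤ _ := (measureReal_union_le _ _).trans (by gcongr; exact measureReal_union_le _ _)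

end MaxMixture

theorem max_mixture_tail_dependence_beta_lt_one_general
    {Ω : Type*} [MeasurableSpace Ω] (P : Measure Ω) [IsProbabilityMeasure P]
    (β q b : ℝ) (hβ : β ∈ Set.Ioo (0 : ℝ) 1) (hq : q ∈ Set.Ioo (0 : ℝ) 1)
    (Z₁ Z₂ Y₁ Y₂ : Ω → ℝ)
    (hZ₁ : Tendsto (fun z : ℝ => z * (P {ω | z < Z₁ ω}).toReal) atTop (nhds 1))
    (hZ₂ : Tendsto (fun z : ℝ => z * (P {ω | z < Z₂ ω}).toReal) atTop (nhds 1))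
    (hYJ : Tendsto (fun z : ℝ => z ^ β * (P {ω | z < Y₁ ω ∧ z < Y₂ ω}).toReal) atTop (nhds b)) :
    Tendsto (fun z : ℝ => z ^ β * (P {ω | z < max (q * Z₁ ω) ((1 - q) * Y₁ ω)
        ∧ z < max (q * Z₂ ω) ((1 - q) * Y₂ ω)}).toReal) atTop
      (nhds ((1 - q) ^ β * b)) := by
  obtain ⟨-, hβ1⟩ := hβ
  obtain ⟨hq0, hq1⟩ := hq
  have hq0' : 0 < 1 - q := sub_pos.mpr hq1
  have hY := tendsto_rpow_mul_comp_div hq0' hYJ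
  have hZ₁' := tendsto_rpow_mul_comp_div hq0 (tendsto_rpow_mul_of_tendsto_mul hβ1 hZ₁)
  have hZ₂' := tendsto_rpow_mul_comp_div hq0 (tendsto_rpow_mul_of_tendsto_mul hβ1 hZ₂)
  rw [mul_zero] at hZ₁' hZ₂'
  refine tendsto_of_tendsto_of_tendsto_of_le_of_le' hY
    (by simpa only [add_zero] using (hY.add hZ₁').add hZ₂') ?_ ?_ <;>
    filter_upwards [eventually_ge_atTop 0] with z hz
  · exact mul_le_mul_of_nonneg_left (measureReal_setOf_div_lt_le P hq0 hq0') (rpow_nonneg hz β)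
  · simp only [← mul_add]
    exact mul_le_mul_of_nonneg_left (measureReal_setOf_lt_max_le P hq0 hq0') (rpow_nonneg hz β)

/-- For `0 < β < 1`, the tail-dependence of the max-mixture `max{q Zᵢ, (1-q) Yᵢ}` is
governed entirely by the `Y` component: its joint exceedance rate satisfies
`z^β P(both > z) → (1-q)^β b`. -/
theorem max_mixture_tail_dependence_beta_lt_one
    {Ω : Type*} [MeasurableSpace Ω] (P : Measure Ω) [IsProbabilityMeasure P]
    (β q a b : ℝ) (hβ : β ∈ Set.Ioo (0 : ℝ) 1) (hq : q ∈ Set.Ioo (0 : ℝ) 1)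
    (ha : 0 ≤ a) (hb : 0 ≤ b)
    (Z₁ Z₂ Y₁ Y₂ : Ω → ℝ)
    (hZ₁m : Measurable Z₁) (hZ₂m : Measurable Z₂) (hY₁m : Measurable Y₁) (hY₂m : Measurable Y₂)
    (hZ₁0 : ∀ ω, 0 ≤ Z₁ ω) (hZ₂0 : ∀ ω, 0 ≤ Z₂ ω) (hY₁0 : ∀ ω, 0 ≤ Y₁ ω) (hY₂0 : ∀ ω, 0 ≤ Y₂ ω)
    (hind : IndepFun (fun ω => (Z₁ ω, Z₂ ω)) (fun ω => (Y₁ ω, Y₂ ω)) P)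
    (hZ₁ : Tendsto (fun z : ℝ => z * (P {ω | z < Z₁ ω}).toReal) atTop (nhds 1))
    (hZ₂ : Tendsto (fun z : ℝ => z * (P {ω | z < Z₂ ω}).toReal) atTop (nhds 1))
    (hY₁ : Tendsto (fun z : ℝ => z ^ β * (P {ω | z < Y₁ ω}).toReal) atTop (nhds 1))
    (hY₂ : Tendsto (fun z : ℝ => z ^ β * (P {ω | z < Y₂ ω}).toReal) atTop (nhds 1))
    (hZJ : Tendsto (fun z : ℝ => z * (P {ω | z < Z₁ ω ∧ z < Z₂ ω}).toReal) atTop (nhds a))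
    (hYJ : Tendsto (fun z : ℝ => z ^ β * (P {ω | z < Y₁ ω ∧ z < Y₂ ω}).toReal) atTop (nhds b)) :
    Tendsto (fun z : ℝ => z ^ β * (P {ω | z < max (q * Z₁ ω) ((1 - q) * Y₁ ω)
        ∧ z < max (q * Z₂ ω) ((1 - q) * Y₂ ω)}).toReal) atTop
      (nhds ((1 - q) ^ β * b)) :=
  max_mixture_tail_dependence_beta_lt_one_general P β q b hβ hq Z₁ Z₂ Y₁ Y₂ hZ₁ hZ₂ hYJ
end

section
/- Let μ be a probability measure on a measurable space and let m be a measurable function with 0 ≤ m ≤ 1 μ-almost everywhere, and let m* denote the μ-essential supremum of m. Then lim_{u→0⁺} log(∫ u^{2−m} dμ)/log u = 2 − m*. (Hence the diagonal C(u, u) = ∫ u^{2−min{δ₁,δ₂}} dμ of the copula of the simplified max-convolution process has lower tail order κ_L = 2 − ess sup min{δ₁, δ₂}, giving intermediate lower tail dependence with κ_L ∈ (1, 2) when 0 < ess sup min{δ₁, δ₂} < 1.) -/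
open MeasureTheory Filter Real Set Topology

/-!
For `0 < u < 1` the map `t ↦ u ^ t` is decreasing, so `∫ u ^ f dμ` is dominated by the smallest
values `f` takes on a set of positive measure. If `f ≥ κ` a.e., then `∫ u ^ f ≤ μ(α) u ^ κ`, and
for `κ' > κ` the set `{f < κ'}` has positive measure `c`, so `∫ u ^ f ≥ c u ^ κ'`. Taking
`log (·) / log u` turns these into `κ + o(1)` and `κ' + o(1)` as `u → 0⁺`, since a constant factor
only contributes `log c / log u → 0`. The theorem is the case `f = 2 - m`, `κ = 2 - ess sup m`.
-/

namespace Real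

lemma log_mul_rpow_div_log {c u : ℝ} (κ : ℝ) (hc : 0 < c) (hu : 0 < u) (hlog : log u ≠ 0) :
    log (c * u ^ κ) / log u = κ + log c / log u := by
  rw [log_mul hc.ne' (rpow_pos_of_pos hu κ).ne', log_rpow hu, add_div,
    mul_div_cancel_right₀ _ hlog, add_comm]

lemma antitoneOn_log_div_log {u : ℝ} (hu₀ : 0 < u) (hu₁ : u < 1) :
    AntitoneOn (fun y => log y / log u) (Ioi 0) := fun _ hy _ _ hyz =>
  div_le_div_of_nonpos_of_le (log_neg hu₀ hu₁).le (log_le_log hy hyz)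

lemma tendsto_const_div_log_nhdsGT_zero (c : ℝ) :
    Tendsto (fun u => c / log u) (𝓝[>] 0) (𝓝 0) :=
  tendsto_log_nhdsGT_zero.const_div_atBot c

theorem tendsto_log_div_log_of_rpow_bounds {g : ℝ → ℝ} {κ C : ℝ}
    (hup : ∀ᶠ u in 𝓝[>] 0, g u ≤ C * u ^ κ)
    (hlow : ∀ κ' > κ, ∃ c > 0, ∀ᶠ u in 𝓝[>] 0, c * u ^ κ' ≤ g u) :
    Tendsto (fun u => log (g u) / log u) (𝓝[>] 0) (𝓝 κ) := by
  have hunit : ∀ᶠ u in 𝓝[>] (0 : ℝ), u ∈ Ioo 0 1 := Ioo_mem_nhdsGT one_pos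
  have hpos : ∀ᶠ u in 𝓝[>] (0 : ℝ), 0 < g u := by
    obtain ⟨c, hc, hcg⟩ := hlow (κ + 1) (lt_add_one κ)
    filter_upwards [hcg, hunit] with u hu hu01
    exact (mul_pos hc (rpow_pos_of_pos hu01.1 _)).trans_le hu
  have hC : 0 < C := by
    obtain ⟨u, hu, hgu, hgC⟩ := (hunit.and (hpos.and hup)).exists
    exact pos_of_mul_pos_left (hgu.trans_le hgC) (rpow_nonneg hu.1.le κ)
  refine tendsto_order.2 ⟨fun a ha => ?_, fun a ha => ?_⟩
  · have hlim := (tendsto_const_div_log_nhdsGT_zero (log C)).const_add κ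
    rw [add_zero] at hlim
    filter_upwards [hlim.eventually_const_lt ha, hunit, hpos, hup] with u hau hu hgu hgC
    calc a < κ + log C / log u := hau
      _ = log (C * u ^ κ) / log u := (log_mul_rpow_div_log κ hC hu.1 (log_neg hu.1 hu.2).ne).symm
      _ ≤ log (g u) / log u := antitoneOn_log_div_log hu.1 hu.2 hgu (hgu.trans_le hgC) hgC
  · obtain ⟨c, hc, hcg⟩ := hlow ((κ + a) / 2) (by linarith)
    have hlim := (tendsto_const_div_log_nhdsGT_zero (log c)).const_add ((κ + a) / 2)
    rw [add_zero] at hlim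
    filter_upwards [hlim.eventually_lt_const (by linarith : (κ + a) / 2 < a), hunit, hcg]
      with u hau hu hcgu
    have hcu : 0 < c * u ^ ((κ + a) / 2) := mul_pos hc (rpow_pos_of_pos hu.1 _)
    calc log (g u) / log u ≤ log (c * u ^ ((κ + a) / 2)) / log u :=
          antitoneOn_log_div_log hu.1 hu.2 hcu (hcu.trans_le hcgu) hcgu
      _ = (κ + a) / 2 + log c / log u := log_mul_rpow_div_log _ hc hu.1 (log_neg hu.1 hu.2).ne
      _ < a := hau

end Real

section IntegralRpow

variable {α : Type*} [MeasurableSpace α] {μ : Measure α} [IsFiniteMeasure μ] {f : α → ℝ}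
  {κ u : ℝ}

lemma integrable_rpow_of_ae_le (hf : Measurable f) (hκ : ∀ᵐ x ∂μ, κ ≤ f x) (hu : u ∈ Ioc 0 1) :
    Integrable (fun x => u ^ f x) μ := by
  refine (integrable_const (u ^ κ)).mono' (measurable_const.pow hf).aestronglyMeasurable ?_
  filter_upwards [hκ] with x hx
  rw [norm_of_nonneg (rpow_nonneg hu.1.le _)]
  exact rpow_le_rpow_of_exponent_ge hu.1 hu.2 hx

lemma integral_rpow_le (hf : Measurable f) (hκ : ∀ᵐ x ∂μ, κ ≤ f x) (hu : u ∈ Ioc 0 1) :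
    ∫ x, u ^ f x ∂μ ≤ μ.real univ * u ^ κ := by
  calc ∫ x, u ^ f x ∂μ ≤ ∫ _, u ^ κ ∂μ :=
        integral_mono_ae (integrable_rpow_of_ae_le hf hκ hu) (integrable_const _)
          (hκ.mono fun _ hx => rpow_le_rpow_of_exponent_ge hu.1 hu.2 hx)
    _ = μ.real univ * u ^ κ := by rw [integral_const, smul_eq_mul]

lemma measureReal_mul_rpow_le_integral_rpow (hf : Measurable f) (hκ : ∀ᵐ x ∂μ, κ ≤ f x)
    (hu : u ∈ Ioc 0 1) (κ' : ℝ) :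
    μ.real {x | f x < κ'} * u ^ κ' ≤ ∫ x, u ^ f x ∂μ := by
  have hint := integrable_rpow_of_ae_le hf hκ hu
  calc μ.real {x | f x < κ'} * u ^ κ' = ∫ _ in {x | f x < κ'}, u ^ κ' ∂μ := by
        rw [setIntegral_const, smul_eq_mul]
    _ ≤ ∫ x in {x | f x < κ'}, u ^ f x ∂μ :=
        setIntegral_mono_on (integrable_const _).integrableOn hint.integrableOn
          (measurableSet_lt hf measurable_const)
          fun _ hx => rpow_le_rpow_of_exponent_ge hu.1 hu.2 (le_of_lt hx)
    _ ≤ ∫ x, u ^ f x ∂μ :=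
        setIntegral_le_integral hint (Eventually.of_forall fun _ => rpow_nonneg hu.1.le _)

theorem tendsto_log_integral_rpow_div_log (hf : Measurable f) (hκ : ∀ᵐ x ∂μ, κ ≤ f x)
    (hpos : ∀ κ' > κ, μ {x | f x < κ'} ≠ 0) :
    Tendsto (fun u => log (∫ x, u ^ f x ∂μ) / log u) (𝓝[>] 0) (𝓝 κ) := by
  have hunit : ∀ᶠ u in 𝓝[>] (0 : ℝ), u ∈ Ioc 0 1 := Ioc_mem_nhdsGT one_pos
  refine tendsto_log_div_log_of_rpow_bounds (hunit.mono fun _ hu => integral_rpow_le hf hκ hu)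
    fun κ' hκ' => ⟨μ.real {x | f x < κ'}, ?_,
      hunit.mono fun _ hu => measureReal_mul_rpow_le_integral_rpow hf hκ hu κ'⟩
  exact ENNReal.toReal_pos (hpos κ' hκ') (measure_ne_top μ _)

end IntegralRpow

/-- The lower tail order of the mixture copula with diagonal `C(u,u) = ∫ u^{2-m} dμ` is
`κ_L = 2 - ess sup m`: one has `log (∫ u^{2-m} dμ) / log u → 2 - ess sup m` as `u → 0⁺`. -/
theorem mixture_copula_lower_tail_order
    {α : Type*} [MeasurableSpace α] (μ : Measure α) [IsProbabilityMeasure μ]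
    (m : α → ℝ) (hm : Measurable m) (h01 : ∀ᵐ x ∂μ, 0 ≤ m x ∧ m x ≤ 1) :
    Tendsto (fun u : ℝ => Real.log (∫ x, u ^ (2 - m x) ∂μ) / Real.log u)
      (nhdsWithin 0 (Set.Ioi 0)) (nhds (2 - essSup m μ)) := by
  have hbdd : IsBoundedUnder (· ≤ ·) (ae μ) m := ⟨1, eventually_map.2 (h01.mono fun _ h => h.2)⟩
  have hcobdd : IsCoboundedUnder (· ≤ ·) (ae μ) m :=
    isCoboundedUnder_le_of_eventually_le _ (h01.mono fun _ h => h.1)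
  refine tendsto_log_integral_rpow_div_log (hm.const_sub 2)
    ((ae_le_essSup hbdd).mono fun _ hx => by linarith) fun κ' hκ' => ?_
  have hfreq : ∃ᵐ x ∂μ, 2 - κ' < m x := frequently_lt_of_lt_limsup hcobdd
    (show 2 - κ' < essSup m μ by linarith)
  exact frequently_ae_iff.1 (hfreq.mono fun _ hx => by linarith)
end
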